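/- arXiv:1103.6271 — 3 statements merged into one kernel-verified Lean document; each statement's English description precedes it below -/
import Mathlib

section
/- Let f(x) = sin(x)(1 - 1/(8 sin(x/2)^3)) for x in (0, 2π). Then the third derivative f'''(x) > 0 for all x in (0, 2π). -/
/-!
Since sin x = 2 sin(x/2) cos(x/2), f(x) = sin x - cos(x/2) / (4 sin(x/2)²). Using cos² = 1 - sin²,
the functions 1 / sinᵏ t and cos t / sinᵏ t differentiate into each other, which gives, with
s = sin(x/2) ∈ (0, 1],
  f'''(x) = -cos x + (s⁴ - 20 s² + 24) / (32 s⁵) = (64 s⁷ - 32 s⁵ + s⁴ - 20 s² + 24) / (32 s⁵).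
The numerator equals 64 s³ (s² - 1/4)² + 4 (1 - s³) + 20 (1 - s²) + s⁴ > 0.
-/

open Real Set

noncomputable def f (x : ℝ) : ℝ := Real.sin x * (1 - 1 / (8 * (Real.sin (x/2))^3))

theorem iteratedDeriv_succ_eqOn_of_hasDerivAt {𝕜 F : Type*} [NontriviallyNormedField 𝕜]
    [NormedAddCommGroup F] [NormedSpace 𝕜 F] {U : Set 𝕜} (hU : IsOpen U) {f g g' : 𝕜 → F}
    {n : ℕ} (hf : EqOn (iteratedDeriv n f) g U) (hg : ∀ x ∈ U, HasDerivAt g (g' x) x) :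
    EqOn (iteratedDeriv (n + 1) f) g' U := fun x hx => by
  rw [iteratedDeriv_succ, hf.deriv hU hx, (hg x hx).deriv]

theorem hasDerivAt_one_div_sin_pow {t : ℝ} (ht : sin t ≠ 0) (k : ℕ) :
    HasDerivAt (fun t => 1 / sin t ^ k) (-k * (cos t / sin t ^ (k + 1))) t := by
  simp only [one_div]
  refine (((hasDerivAt_sin t).fun_pow k).inv (pow_ne_zero k ht)).congr_deriv ?_
  rcases k with _ | k
  · simp
  · field_simp
    push_cast
    ring

theorem hasDerivAt_cos_div_sin_pow {t : ℝ} (ht : sin t ≠ 0) (k : ℕ) :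
    HasDerivAt (fun t => cos t / sin t ^ (k + 1))
      (k * (1 / sin t ^ k) - (k + 1) * (1 / sin t ^ (k + 2))) t := by
  refine ((hasDerivAt_cos t).div ((hasDerivAt_sin t).fun_pow (k + 1))
    (pow_ne_zero _ ht)).congr_deriv ?_
  simp only [add_tsub_cancel_right]
  field_simp
  push_cast
  linear_combination (-(k:ℝ) - 1) * sin t ^ k * sin t ^ k * sin t ^ (k + 2) * cos_sq' t

noncomputable def cscPowHalf (k : ℕ) (x : ℝ) : ℝ := 1 / sin (x / 2) ^ k

noncomputable def cosCscPowHalf (k : ℕ) (x : ℝ) : ℝ := cos (x / 2) / sin (x / 2) ^ k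

theorem hasDerivAt_cscPowHalf {x : ℝ} (hx : sin (x / 2) ≠ 0) (k : ℕ) :
    HasDerivAt (cscPowHalf k) (-(k / 2) * cosCscPowHalf (k + 1) x) x := by
  have h := (hasDerivAt_one_div_sin_pow hx k).comp x ((hasDerivAt_id x).div_const 2)
  exact h.congr_deriv (by simp only [cosCscPowHalf]; ring)

theorem hasDerivAt_cosCscPowHalf {x : ℝ} (hx : sin (x / 2) ≠ 0) (k : ℕ) :
    HasDerivAt (cosCscPowHalf (k + 1))
      (k / 2 * cscPowHalf k x - (k + 1) / 2 * cscPowHalf (k + 2) x) x := by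
  have h := (hasDerivAt_cos_div_sin_pow hx k).comp x ((hasDerivAt_id x).div_const 2)
  exact h.congr_deriv (by simp only [cscPowHalf]; ring)

theorem f_eq_sin_sub_cosCscPowHalf : f = fun x => sin x - cosCscPowHalf 2 x / 4 := by
  funext x
  rw [f, cosCscPowHalf]
  rcases eq_or_ne (sin (x / 2)) 0 with hs | hs
  · simp [hs]
  · rw [show x = 2 * (x / 2) by ring, sin_two_mul, show 2 * (x / 2) / 2 = x / 2 by ring]
    field_simp
    ring

theorem sin_half_pos {x : ℝ} (hx : x ∈ Ioo 0 (2 * π)) : 0 < sin (x / 2) :=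
  sin_pos_of_pos_of_lt_pi (by linarith [hx.1]) (by linarith [hx.2])

theorem iteratedDeriv_three_f_eqOn :
    EqOn (iteratedDeriv 3 f)
      (fun x => -cos x - (-cscPowHalf 1 x + 20 * cscPowHalf 3 x - 24 * cscPowHalf 5 x) / 32)
      (Ioo 0 (2 * π)) := by
  have hU : IsOpen (Ioo 0 (2 * π)) := isOpen_Ioo
  have hne : ∀ x ∈ Ioo 0 (2 * π), sin (x / 2) ≠ 0 := fun x hx => (sin_half_pos hx).ne'
  have h₀ : EqOn (iteratedDeriv 0 f) (fun x => sin x - cosCscPowHalf 2 x / 4) (Ioo 0 (2 * π)) :=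
    fun x _ => by rw [iteratedDeriv_zero, f_eq_sin_sub_cosCscPowHalf]
  have h₁ := iteratedDeriv_succ_eqOn_of_hasDerivAt hU h₀
    (g' := fun x => cos x - (cscPowHalf 1 x - 2 * cscPowHalf 3 x) / 8) fun x hx =>
      ((hasDerivAt_sin x).sub ((hasDerivAt_cosCscPowHalf (hne x hx) 1).div_const 4)).congr_deriv
        (by push_cast; ring)
  have h₂ := iteratedDeriv_succ_eqOn_of_hasDerivAt hU h₁
    (g' := fun x => -sin x - (-cosCscPowHalf 2 x + 6 * cosCscPowHalf 4 x) / 16) fun x hx =>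
      ((hasDerivAt_cos x).sub (((hasDerivAt_cscPowHalf (hne x hx) 1).sub
        ((hasDerivAt_cscPowHalf (hne x hx) 3).const_mul 2)).div_const 8)).congr_deriv
        (by push_cast; ring)
  exact iteratedDeriv_succ_eqOn_of_hasDerivAt hU h₂ fun x hx =>
    ((hasDerivAt_sin x).neg.sub (((hasDerivAt_cosCscPowHalf (hne x hx) 1).neg.add
      ((hasDerivAt_cosCscPowHalf (hne x hx) 3).const_mul 6)).div_const 16)).congr_deriv
      (by push_cast; ring)

theorem neg_cos_sub_cscPowHalf_combination_pos {x : ℝ} (hx : x ∈ Ioo 0 (2 * π)) :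
    0 < -cos x - (-cscPowHalf 1 x + 20 * cscPowHalf 3 x - 24 * cscPowHalf 5 x) / 32 := by
  have hs := sin_half_pos hx
  have hs1 := sin_le_one (x / 2)
  have hcos : cos x = 1 - 2 * sin (x / 2) ^ 2 := by
    rw [← cos_two_mul_eq_one_sub]; ring_nf
  rw [hcos]
  simp only [cscPowHalf]
  generalize sin (x / 2) = s at *
  have hnum : 0 < 64 * s ^ 7 - 32 * s ^ 5 + s ^ 4 - 20 * s ^ 2 + 24 := by
    nlinarith [mul_nonneg (pow_pos hs 3).le (sq_nonneg (s ^ 2 - 1 / 4)), pow_pos hs 4,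
      pow_le_one₀ (n := 3) hs.le hs1, pow_le_one₀ (n := 2) hs.le hs1]
  field_simp
  linarith

theorem stmt3 : ∀ x ∈ Ioo (0:ℝ) (2*π), iteratedDeriv 3 f x > 0 := by
  intro x hx
  rw [iteratedDeriv_three_f_eqOn hx]
  exact neg_cos_sub_cscPowHalf_combination_pos hx
end

section
/- Let f(x) = sin(x)(1 - 1/(8 sin(x/2)^3)). Suppose θ₃', θ₂, θ₁ > 0 satisfy f(θ₃') = 0, f(θ₃' + θ₂) = 0, f(θ₃' + θ₂ + θ₁) = 0, and θ₃' + θ₂ + θ₁ < 2π. Then θ₃' = π/3, θ₂ = 2π/3, and θ₁ = 2π/3. -/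
/-! The factor `sin x` vanishes on `(0, 2π)` only at `π`, and the second factor only where
`sin (x / 2) ^ 3 = 1 / 8`, i.e. `sin (x / 2) = 1 / 2`, which happens at `x = π / 3` and `x = 5π / 3`.
Three increasing zeros below `2π` must therefore be exactly `π / 3 < π < 5π / 3`. -/

open Real Set

lemma sin_eq_zero_iff_of_mem_Ioo_zero_two_pi {x : ℝ} (hx : x ∈ Ioo 0 (2 * π)) :
    sin x = 0 ↔ x = π := by
  obtain ⟨h0, h2⟩ := hx
  rw [← neg_eq_zero, ← sin_sub_pi, sin_eq_zero_iff_of_lt_of_lt (by linarith) (by linarith),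
    sub_eq_zero]

lemma sin_eq_one_half_iff_of_mem_Ioo_zero_pi {t : ℝ} (ht : t ∈ Ioo 0 π) :
    sin t = 1 / 2 ↔ t = π / 6 ∨ t = 5 * π / 6 := by
  obtain ⟨h0, hπ⟩ := ht
  have hsin56 : sin (5 * π / 6) = 1 / 2 := by
    rw [show 5 * π / 6 = π - π / 6 by ring, sin_pi_sub, sin_pi_div_six]
  refine ⟨fun hs => ?_, ?_⟩
  · -- `sin` is injective on `[-π/2, π/2]`; reflect `t` into it through `π - t` if needed.
    rcases le_or_gt t (π / 2) with hle | hgt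
    · left
      exact injOn_sin ⟨by linarith, hle⟩ ⟨by linarith, by linarith⟩ (hs.trans sin_pi_div_six.symm)
    · right
      have := injOn_sin (x₁ := π - t) ⟨by linarith, by linarith⟩ ⟨by linarith, by linarith⟩
        ((sin_pi_sub t).trans (hs.trans sin_pi_div_six.symm))
      linarith
  · rintro (rfl | rfl)
    exacts [sin_pi_div_six, hsin56]

lemma eq_one_half_of_eight_mul_pow_three_eq_one {s : ℝ} (h : 8 * s ^ 3 = 1) : s = 1 / 2 :=
  (Odd.pow_inj (by decide : Odd 3)).1 (by linarith)

lemma f_eq_zero_iff {x : ℝ} (hx : x ∈ Ioo 0 (2 * π)) :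
    f x = 0 ↔ x = π / 3 ∨ x = π ∨ x = 5 * π / 3 := by
  have hhalf : x / 2 ∈ Ioo 0 π := ⟨by linarith [hx.1], by linarith [hx.2]⟩
  -- Junk values are harmless: if `sin (x / 2) = 0` the second factor is `1 - 0 ≠ 0`.
  have hsecond : 1 - 1 / (8 * sin (x / 2) ^ 3) = 0 ↔ sin (x / 2) = 1 / 2 := by
    rw [sub_eq_zero, eq_comm, one_div, inv_eq_one]
    exact ⟨eq_one_half_of_eight_mul_pow_three_eq_one, fun h => by rw [h]; norm_num⟩
  rw [f, mul_eq_zero, sin_eq_zero_iff_of_mem_Ioo_zero_two_pi hx, hsecond,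
    sin_eq_one_half_iff_of_mem_Ioo_zero_pi hhalf]
  constructor
  · rintro (h | h | h) <;> [(right; left); left; (right; right)] <;> linarith
  · rintro (h | h | h) <;> [(right; left); left; (right; right)] <;> linarith

theorem stmt9 (θ₃' θ₂ θ₁ : ℝ) (h3 : 0 < θ₃') (h2 : 0 < θ₂) (h1 : 0 < θ₁)
    (hsum : θ₃' + θ₂ + θ₁ < 2*π)
    (hf1 : f θ₃' = 0) (hf2 : f (θ₃' + θ₂) = 0) (hf3 : f (θ₃' + θ₂ + θ₁) = 0) :
    θ₃' = π/3 ∧ θ₂ = 2*π/3 ∧ θ₁ = 2*π/3 := by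
  have hπ := pi_pos
  have ha := (f_eq_zero_iff ⟨h3, by linarith⟩).1 hf1
  have hb := (f_eq_zero_iff ⟨by linarith, by linarith⟩).1 hf2
  have hc := (f_eq_zero_iff ⟨by linarith, hsum⟩).1 hf3
  -- The three zeros are strictly increasing, so only the assignment `π/3, π, 5π/3` survives.
  rcases ha with ha | ha | ha <;> rcases hb with hb | hb | hb <;> rcases hc with hc | hc | hc <;>
    exact ⟨by linarith, by linarith, by linarith⟩
end

section
/- For all x in (0, π/3), f(x) ≠ f(π + x) or 3 f(x) ≠ f(π/2 - x) + f(π - 2x), where f(x) = sin(x)(1 - 1/(8 sin(x/2)^3)). That is, the system f(x) = f(π + x) and 3f(x) = f(π/2 - x) + f(π - 2x) has no common solution x in (0, π/3). -/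
open Real Set

/-!
Write `s = sin (x / 2)`, `c = cos (x / 2)` and `w t = 1 - 1 / (8 t³)`, so that `f x = sin x · w s`
and `f (π + x) = -sin x · w c`. The first equation therefore says `w s = -w c`, i.e.
`s³ + c³ = 16 s³ c³`, and together with `s < 1/2` this confines `s` to `(0.39, 0.42)`. On that
range crude interval bounds, using that `w` is increasing, give `3 f x < -1.41` but
`f (π/2 - x) + f (π - 2x) > -1.06`, so the second equation fails.
-/

noncomputable def weight (t : ℝ) : ℝ := 1 - 1 / (8 * t ^ 3)

lemma f_eq_sin_mul_weight (x : ℝ) : f x = sin x * weight (sin (x / 2)) := rfl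

lemma weight_lt_weight {a b : ℝ} (ha : 0 < a) (hab : a < b) : weight a < weight b := by
  unfold weight
  gcongr

lemma f_pi_add (x : ℝ) : f (π + x) = -sin x * weight (cos (x / 2)) := by
  rw [f_eq_sin_mul_weight, add_comm, sin_add_pi, add_div, sin_add_pi_div_two]

lemma f_pi_div_two_sub (x : ℝ) : f (π / 2 - x) = cos x * weight (sin (π / 4 - x / 2)) := by
  rw [f_eq_sin_mul_weight, sin_pi_div_two_sub]
  congr 3
  ring

lemma f_pi_sub_two_mul (x : ℝ) : f (π - 2 * x) = sin (2 * x) * weight (cos x) := by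
  rw [f_eq_sin_mul_weight, sin_pi_sub, sub_div, mul_div_cancel_left₀ x two_ne_zero,
    sin_pi_div_two_sub]

lemma sin_eq_two_mul_sin_half_mul_cos_half (x : ℝ) : sin x = 2 * sin (x / 2) * cos (x / 2) := by
  rw [← sin_two_mul, mul_div_cancel₀ x two_ne_zero]

lemma cos_eq_one_sub_two_mul_sin_half_sq (x : ℝ) : cos x = 1 - 2 * sin (x / 2) ^ 2 := by
  rw [← cos_two_mul_eq_one_sub, mul_div_cancel₀ x two_ne_zero]

lemma cube_add_cube_eq_of_weight_eq_neg {s c : ℝ} (hs : s ≠ 0) (hc : c ≠ 0)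
    (h : weight s = -weight c) : s ^ 3 + c ^ 3 = 16 * s ^ 3 * c ^ 3 := by
  unfold weight at h
  field_simp at h
  linarith

lemma bounds_of_cube_add_cube_eq {s c : ℝ} (hsc : s ^ 2 + c ^ 2 = 1) (hs : 0 < s)
    (hs' : s < 1 / 2) (hc : 0 < c) (h : s ^ 3 + c ^ 3 = 16 * s ^ 3 * c ^ 3) :
    0.39 < s ∧ s < 0.42 ∧ 0.905 < c := by
  have hc_lb : 0.85 < c := by nlinarith
  have hc3 : 0.6 < c ^ 3 := by nlinarith [pow_lt_pow_left₀ hc_lb (by norm_num) three_ne_zero]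
  have hs3 : 0 < s ^ 3 := by positivity
  have hs3_lb : 0.39 ^ 3 < s ^ 3 := by nlinarith
  have hs3_ub : s ^ 3 < 0.42 ^ 3 := by nlinarith
  have hs_lb := lt_of_pow_lt_pow_left₀ 3 hs.le hs3_lb
  have hs_ub := lt_of_pow_lt_pow_left₀ 3 (by norm_num) hs3_ub
  exact ⟨hs_lb, hs_ub, by nlinarith⟩

lemma sin_gt_of_half_angle_bounds {x : ℝ} (hs : 0.39 < sin (x / 2)) (hc : 0.905 < cos (x / 2)) :
    0.7 < sin x := by
  rw [sin_eq_two_mul_sin_half_mul_cos_half]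
  nlinarith

lemma cos_mem_Ioo_of_half_angle_bounds {x : ℝ} (hs : 0.39 < sin (x / 2))
    (hs' : sin (x / 2) < 0.42) : cos x ∈ Ioo 0.647 0.696 := by
  rw [cos_eq_one_sub_two_mul_sin_half_sq]
  constructor <;> nlinarith

section Estimates

variable {x : ℝ} (hs : 0.39 < sin (x / 2)) (hs' : sin (x / 2) < 0.42) (hc : 0.905 < cos (x / 2))
include hs hs' hc

lemma f_lt_of_half_angle_bounds : f x < -0.47 := by
  have hsin := sin_gt_of_half_angle_bounds hs hc
  have hw : weight (sin (x / 2)) < -0.68 :=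
    (weight_lt_weight (by linarith) hs').trans (by norm_num [weight])
  rw [f_eq_sin_mul_weight]
  nlinarith

lemma f_pi_div_two_sub_gt_of_half_angle_bounds : -1.53 < f (π / 2 - x) := by
  have hcos := cos_mem_Ioo_of_half_angle_bounds hs hs'
  have hu : 0.34 < sin (π / 4 - x / 2) := by
    have hsqrt : 1.41 < √2 := by rw [Real.lt_sqrt] <;> norm_num
    rw [sin_sub, sin_pi_div_four, cos_pi_div_four]
    nlinarith
  have hw : -2.19 < weight (sin (π / 4 - x / 2)) :=
    (show (-2.19 : ℝ) < weight 0.34 by norm_num [weight]).trans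
      (weight_lt_weight (by norm_num) hu)
  rw [f_pi_div_two_sub]
  nlinarith [hcos.1, hcos.2]

lemma f_pi_sub_two_mul_gt_of_half_angle_bounds : 0.47 < f (π - 2 * x) := by
  have hcos := (cos_mem_Ioo_of_half_angle_bounds hs hs').1
  have hsin := sin_gt_of_half_angle_bounds hs hc
  have hsin2 : 0.9 < sin (2 * x) := by
    rw [sin_two_mul]; nlinarith
  have hw : 0.53 < weight (cos x) :=
    (show (0.53 : ℝ) < weight 0.647 by norm_num [weight]).trans
      (weight_lt_weight (by norm_num) hcos)
  rw [f_pi_sub_two_mul]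
  nlinarith

end Estimates

theorem stmt15 : ∀ x ∈ Ioo (0:ℝ) (π/3),
    ¬(f x = f (π + x) ∧ 3 * f x = f (π/2 - x) + f (π - 2*x)) := by
  rintro x ⟨hx0, hx3⟩ ⟨h1, h2⟩
  have hs0 : 0 < sin (x / 2) := sin_pos_of_pos_of_lt_pi (by linarith) (by linarith [pi_pos])
  have hs_half : sin (x / 2) < 1 / 2 := by
    rw [← sin_pi_div_six]
    exact sin_lt_sin_of_lt_of_le_pi_div_two (by linarith [pi_pos]) (by linarith) (by linarith)
  have hc0 : 0 < cos (x / 2) := cos_pos_of_mem_Ioo ⟨by linarith [pi_pos], by linarith⟩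
  have hweight : weight (sin (x / 2)) = -weight (cos (x / 2)) := by
    have hsin : sin x ≠ 0 := (sin_pos_of_pos_of_lt_pi hx0 (by linarith [pi_pos])).ne'
    rw [f_eq_sin_mul_weight, f_pi_add] at h1
    exact mul_left_cancel₀ hsin (by linarith)
  obtain ⟨hs, hs', hc⟩ := bounds_of_cube_add_cube_eq (sin_sq_add_cos_sq _) hs0 hs_half hc0
    (cube_add_cube_eq_of_weight_eq_neg hs0.ne' hc0.ne' hweight)
  linarith [f_lt_of_half_angle_bounds hs hs' hc, f_pi_div_two_sub_gt_of_half_angle_bounds hs hs' hc,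
    f_pi_sub_two_mul_gt_of_half_angle_bounds hs hs' hc]
end
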